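/- arXiv:1706.08969 — 2 statements merged into one kernel-verified Lean document; each statement's English description precedes it below -/
import Mathlib

section
/- For the piecewise interaction potential u defined with parameters F_r, F_a > 0, 0 < d_r < d_a and s ∈ (0,2], s ≠ 1, one has ∫₀^∞ u(r)·r dr = F_r·d_r³·(11s+6)/(192 s) − (F_a/30)·(d_a − d_r)·(3 d_a² + 4 d_a d_r + 3 d_r²). -/
/-!
On `(0, d_r/2]` the integrand `u r * r` is `A r^(2s-1) + B r`, which is integrable at `0` because
`2s - 1 > -1`; on `(d_r/2, d_r]` and `(d_r, d_a]` it is a polynomial, and it vanishes beyond `d_a`.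
So the improper integral is a sum of three elementary integrals, and the closed form follows by
collecting `(d_r/2)^(3-2s) (d_r/2)^(2s) = (d_r/2)^3`.
-/

open Real MeasureTheory Set

section Splitting

variable {E : Type*} [NormedAddCommGroup E] [NormedSpace ℝ E] {μ : Measure ℝ} {f : ℝ → E}
  {a b c d : ℝ}

theorem setIntegral_Ioi_eq_intervalIntegral_of_eq_zero (had : a ≤ d)
    (hf : ∀ x, d < x → f x = 0) : ∫ x in Ioi a, f x ∂μ = ∫ x in a..d, f x ∂μ := by
  rw [intervalIntegral.integral_of_le had]
  exact setIntegral_eq_of_subset_of_forall_sdiff_eq_zero measurableSet_Ioi Ioc_subset_Ioi_self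
    fun x hx => hf x (not_le.mp fun hxd => hx.2 ⟨hx.1, hxd⟩)

theorem setIntegral_Ioi_eq_sum_of_eqOn_Ioo [NullSingletonClass μ] {g₁ g₂ g₃ : ℝ → E}
    (hab : a ≤ b) (hbc : b ≤ c) (hcd : c ≤ d)
    (h₁ : EqOn f g₁ (Ioo a b)) (h₂ : EqOn f g₂ (Ioo b c)) (h₃ : EqOn f g₃ (Ioo c d))
    (h₄ : ∀ x, d < x → f x = 0) (hg₁ : IntervalIntegrable g₁ μ a b)
    (hg₂ : IntervalIntegrable g₂ μ b c) (hg₃ : IntervalIntegrable g₃ μ c d) :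
    ∫ x in Ioi a, f x ∂μ =
      (∫ x in a..b, g₁ x ∂μ) + (∫ x in b..c, g₂ x ∂μ) + ∫ x in c..d, g₃ x ∂μ := by
  have hf₁ : IntervalIntegrable f μ a b :=
    (intervalIntegrable_congr_uIoo (uIoo_of_le hab ▸ h₁)).mpr hg₁
  have hf₂ : IntervalIntegrable f μ b c :=
    (intervalIntegrable_congr_uIoo (uIoo_of_le hbc ▸ h₂)).mpr hg₂
  have hf₃ : IntervalIntegrable f μ c d :=
    (intervalIntegrable_congr_uIoo (uIoo_of_le hcd ▸ h₃)).mpr hg₃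
  rw [setIntegral_Ioi_eq_intervalIntegral_of_eq_zero (hab.trans (hbc.trans hcd)) h₄,
    ← intervalIntegral.integral_add_adjacent_intervals hf₁ (hf₂.trans hf₃),
    ← intervalIntegral.integral_add_adjacent_intervals hf₂ hf₃,
    intervalIntegral.integral_congr_Ioo_of_le hab h₁,
    intervalIntegral.integral_congr_Ioo_of_le hbc h₂,
    intervalIntegral.integral_congr_Ioo_of_le hcd h₃, add_assoc]

end Splitting

theorem integral_cubic_mul_self (a b c₀ c₁ c₂ c₃ : ℝ) :
    ∫ x in a..b, (c₃ * x ^ 3 + c₂ * x ^ 2 + c₁ * x + c₀) * x =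
      (c₃ * b ^ 5 / 5 + c₂ * b ^ 4 / 4 + c₁ * b ^ 3 / 3 + c₀ * b ^ 2 / 2) -
        (c₃ * a ^ 5 / 5 + c₂ * a ^ 4 / 4 + c₁ * a ^ 3 / 3 + c₀ * a ^ 2 / 2) := by
  refine intervalIntegral.integral_eq_sub_of_hasDerivAt
    (f := fun x => c₃ * x ^ 5 / 5 + c₂ * x ^ 4 / 4 + c₁ * x ^ 3 / 3 + c₀ * x ^ 2 / 2)
    (fun x _ => ?_)
    ((by fun_prop : Continuous fun x : ℝ => (c₃ * x ^ 3 + c₂ * x ^ 2 + c₁ * x + c₀) * x)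
      |>.intervalIntegrable _ _)
  convert (((((hasDerivAt_pow 5 x).const_mul c₃).div_const 5).fun_add
    (((hasDerivAt_pow 4 x).const_mul c₂).div_const 4)).fun_add
    (((hasDerivAt_pow 3 x).const_mul c₁).div_const 3)).fun_add
    (((hasDerivAt_pow 2 x).const_mul c₀).div_const 2) using 1
  norm_num
  ring

theorem integral_rpow_sub_one_add_mul_self {p : ℝ} (hp : 0 < p) (A B c : ℝ) :
    ∫ x in (0 : ℝ)..c, A * x ^ (p - 1) + B * x = A * c ^ p / p + B * c ^ 2 / 2 := by
  have hp' : -1 < p - 1 := by linarith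
  rw [intervalIntegral.integral_add ((intervalIntegral.intervalIntegrable_rpow' hp').const_mul A)
      ((intervalIntegral.intervalIntegrable_id).const_mul B),
    intervalIntegral.integral_const_mul, intervalIntegral.integral_const_mul,
    integral_rpow (Or.inl hp'), integral_id, sub_add_cancel, zero_rpow hp.ne']
  ring

theorem intervalIntegrable_rpow_sub_one_add_mul_self {p : ℝ} (hp : 0 < p) (A B a b : ℝ) :
    IntervalIntegrable (fun x => A * x ^ (p - 1) + B * x) volume a b :=
  ((intervalIntegral.intervalIntegrable_rpow' (by linarith)).const_mul A).add
    (intervalIntegral.intervalIntegrable_id.const_mul B)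

theorem stmt0_general (dr da Fr Fa s : ℝ) (hdr : 0 < dr) (hdra : dr < da)
    (hs0 : 0 < s) (hs1 : s ≠ 1)
    (u : ℝ → ℝ)
    (h1 : ∀ r : ℝ, 0 < r → r ≤ dr / 2 →
      u r = -(Fr / (2 * (s - 1))) * (dr / 2) ^ (3 - 2 * s) * r ^ (2 * s - 2)
            + Fr * dr * s / (4 * (s - 1)) - (2 / 3) * Fa * (da - dr))
    (h2 : ∀ r : ℝ, dr / 2 < r → r ≤ dr →
      u r = Fr * r ^ 2 / dr - 2 * Fr * r + Fr * dr - (2 / 3) * Fa * (da - dr))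
    (h3 : ∀ r : ℝ, dr < r → r ≤ da →
      u r = -(2 * Fa / (3 * (da - dr) ^ 2)) *
            (2 * r ^ 3 - 3 * (da + dr) * r ^ 2 + 6 * da * dr * r - da ^ 2 * (3 * dr - da)))
    (h4 : ∀ r : ℝ, da < r → u r = 0) :
    ∫ r in Ioi (0 : ℝ), u r * r
      = Fr * dr ^ 3 * (11 * s + 6) / (192 * s)
        - (Fa / 30) * (da - dr) * (3 * da ^ 2 + 4 * da * dr + 3 * dr ^ 2) := by
  set A := -(Fr / (2 * (s - 1))) * (dr / 2) ^ (3 - 2 * s) with hA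
  set K := -(2 * Fa / (3 * (da - dr) ^ 2)) with hK
  have h2s : 0 < 2 * s := by positivity
  have core : EqOn (fun r => u r * r)
      (fun r => A * r ^ (2 * s - 1) + (Fr * dr * s / (4 * (s - 1)) - 2 / 3 * Fa * (da - dr)) * r)
      (Ioo 0 (dr / 2)) := by
    intro r hr
    simp only [h1 r hr.1 hr.2.le]
    rw [show 2 * s - 1 = 2 * s - 2 + 1 by ring, rpow_add_one hr.1.ne']
    ring
  have near : EqOn (fun r => u r * r)
      (fun r =>
        (0 * r ^ 3 + Fr / dr * r ^ 2 + -2 * Fr * r + (Fr * dr - 2 / 3 * Fa * (da - dr))) * r)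
      (Ioo (dr / 2) dr) := by
    intro r hr
    simp only [h2 r hr.1 hr.2.le]
    ring
  have far : EqOn (fun r => u r * r)
      (fun r => (2 * K * r ^ 3 + -3 * K * (da + dr) * r ^ 2 + 6 * K * da * dr * r
        + -K * da ^ 2 * (3 * dr - da)) * r) (Ioo dr da) := by
    intro r hr
    simp only [h3 r hr.1 hr.2.le]
    ring
  have hA3 : A * (dr / 2) ^ (2 * s) = -(Fr / (2 * (s - 1))) * (dr / 2) ^ 3 := by
    rw [hA, mul_assoc, ← rpow_add (by positivity)]
    norm_num
  rw [setIntegral_Ioi_eq_sum_of_eqOn_Ioo (by positivity) (by linarith) hdra.le core near far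
      (fun r hr => by rw [h4 r hr, zero_mul])
      (intervalIntegrable_rpow_sub_one_add_mul_self h2s _ _ _ _)
      ((by fun_prop : Continuous _).intervalIntegrable _ _)
      ((by fun_prop : Continuous _).intervalIntegrable _ _),
    integral_rpow_sub_one_add_mul_self h2s, integral_cubic_mul_self,
    integral_cubic_mul_self, hA3, hK]
  have hs1' : s - 1 ≠ 0 := sub_ne_zero.mpr hs1
  have hdd : da - dr ≠ 0 := sub_ne_zero.mpr hdra.ne'
  field_simp
  ring

theorem stmt0 (dr da Fr Fa s : ℝ) (hdr : 0 < dr) (hdra : dr < da)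
    (hFr : 0 < Fr) (hFa : 0 < Fa) (hs0 : 0 < s) (hs2 : s ≤ 2) (hs1 : s ≠ 1)
    (u : ℝ → ℝ)
    (h1 : ∀ r : ℝ, 0 < r → r ≤ dr / 2 →
      u r = -(Fr / (2 * (s - 1))) * (dr / 2) ^ (3 - 2 * s) * r ^ (2 * s - 2)
            + Fr * dr * s / (4 * (s - 1)) - (2 / 3) * Fa * (da - dr))
    (h2 : ∀ r : ℝ, dr / 2 < r → r ≤ dr →
      u r = Fr * r ^ 2 / dr - 2 * Fr * r + Fr * dr - (2 / 3) * Fa * (da - dr))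
    (h3 : ∀ r : ℝ, dr < r → r ≤ da →
      u r = -(2 * Fa / (3 * (da - dr) ^ 2)) *
            (2 * r ^ 3 - 3 * (da + dr) * r ^ 2 + 6 * da * dr * r - da ^ 2 * (3 * dr - da)))
    (h4 : ∀ r : ℝ, da < r → u r = 0) :
    ∫ r in Ioi (0 : ℝ), u r * r
      = Fr * dr ^ 3 * (11 * s + 6) / (192 * s)
        - (Fa / 30) * (da - dr) * (3 * da ^ 2 + 4 * da * dr + 3 * dr ^ 2) :=
  stmt0_general dr da Fr Fa s hdr hdra hs0 hs1 u h1 h2 h3 h4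
end

section
/- For the hyperbolic-case potential u (the s = 1 case), ∫₀^∞ u(r)·r dr = F_r·d_r³·17/192 − (F_a/30)·(d_a − d_r)·(3 d_a² + 4 d_a d_r + 3 d_r²); consequently this integral is positive if and only if F_r/F_a > 32 (d_a − d_r)(3 d_a² + 4 d_a d_r + 3 d_r²)/(85 d_r³). -/
/-!
On `(0, d_a]` the integrand `u r * r` is, piece by piece, `(A log r + B) r` on `(0, d_r/2]` and a
polynomial on `(d_r/2, d_r]` and `(d_r, d_a]`; beyond `d_a` it vanishes. The logarithmic piece has
the antiderivative `A (r²/2 log r - r²/4) + B r²/2`, which is continuous at `0`, and the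
`log (d_r/2)` terms it produces cancel against the constant `B`. Summing the three pieces gives the
closed form, and the sign condition is a linear inequality in `F_r` and `F_a`.
-/

open Real MeasureTheory Set

theorem continuous_affine_log_mul_id (A B : ℝ) : Continuous fun x : ℝ => (A * log x + B) * x := by
  refine ((continuous_mul_log.const_mul A).add (continuous_id.const_mul B)).congr fun x => ?_
  simp only [Pi.add_apply, id]
  ring

theorem integral_affine_log_mul_id (A B b : ℝ) :
    ∫ x in (0 : ℝ)..b, (A * log x + B) * x
      = A * (b ^ 2 / 2 * log b - b ^ 2 / 4) + B * (b ^ 2 / 2) := by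
  have hderiv : ∀ x ∈ Ioo (min 0 b) (max 0 b), HasDerivWithinAt
      (fun x => A * (x * (x * log x) / 2 - x ^ 2 / 4) + B * (x ^ 2 / 2)) ((A * log x + B) * x)
      (Ioi x) x := by
    intro x hx
    have hx0 : x ≠ 0 := by
      rintro rfl
      simp only [mem_Ioo, min_lt_iff, lt_max_iff] at hx
      rcases hx with ⟨h | h, h' | h'⟩ <;> linarith
    have hxlog := (hasDerivAt_id' x).fun_mul (hasDerivAt_log hx0)
    have h := (((hasDerivAt_id' x).fun_mul hxlog).div_const 2
      |>.fun_sub ((hasDerivAt_pow 2 x).div_const 4)).const_mul A |>.fun_add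
      (((hasDerivAt_pow 2 x).div_const 2).const_mul B)
    refine (h.congr_deriv ?_).hasDerivWithinAt
    field_simp
    ring
  rw [intervalIntegral.integral_eq_sub_of_hasDeriv_right (by fun_prop) hderiv
    ((continuous_affine_log_mul_id A B).intervalIntegrable _ _)]
  simp only [zero_mul, mul_zero, zero_div, ne_eq, OfNat.ofNat_ne_zero, not_false_eq_true, zero_pow]
  ring

theorem integral_cubic_mul_id (c₀ c₁ c₂ c₃ a b : ℝ) :
    ∫ x in a..b, (c₃ * x ^ 3 + c₂ * x ^ 2 + c₁ * x + c₀) * x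
      = c₃ / 5 * (b ^ 5 - a ^ 5) + c₂ / 4 * (b ^ 4 - a ^ 4) + c₁ / 3 * (b ^ 3 - a ^ 3)
        + c₀ / 2 * (b ^ 2 - a ^ 2) := by
  have hderiv : ∀ x, HasDerivAt (fun x => c₃ / 5 * x ^ 5 + c₂ / 4 * x ^ 4 + c₁ / 3 * x ^ 3
      + c₀ / 2 * x ^ 2) ((c₃ * x ^ 3 + c₂ * x ^ 2 + c₁ * x + c₀) * x) x := by
    intro x
    refine (((hasDerivAt_pow 5 x).const_mul (c₃ / 5)).fun_add
      ((hasDerivAt_pow 4 x).const_mul (c₂ / 4)) |>.fun_add ((hasDerivAt_pow 3 x).const_mul (c₁ / 3))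
      |>.fun_add ((hasDerivAt_pow 2 x).const_mul (c₀ / 2))).congr_deriv ?_
    push_cast
    ring
  rw [intervalIntegral.integral_eq_sub_of_hasDerivAt (fun x _ => hderiv x)
    (by apply Continuous.intervalIntegrable; fun_prop)]
  ring

theorem setIntegral_Ioi_eq_of_eqOn_Ioc₃ {f g₁ g₂ g₃ : ℝ → ℝ} {a b c d : ℝ}
    (hab : a ≤ b) (hbc : b ≤ c) (hcd : c ≤ d) (hg₁ : IntervalIntegrable g₁ volume a b)
    (hg₂ : IntervalIntegrable g₂ volume b c) (hg₃ : IntervalIntegrable g₃ volume c d)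
    (h₁ : EqOn f g₁ (Ioc a b)) (h₂ : EqOn f g₂ (Ioc b c)) (h₃ : EqOn f g₃ (Ioc c d))
    (h₀ : ∀ x, d < x → f x = 0) :
    ∫ x in Ioi a, f x = (∫ x in a..b, g₁ x) + (∫ x in b..c, g₂ x) + ∫ x in c..d, g₃ x := by
  have hf₁ : IntervalIntegrable f volume a b :=
    (intervalIntegrable_congr (by rwa [uIoc_of_le hab])).mpr hg₁
  have hf₂ : IntervalIntegrable f volume b c :=
    (intervalIntegrable_congr (by rwa [uIoc_of_le hbc])).mpr hg₂
  have hf₃ : IntervalIntegrable f volume c d :=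
    (intervalIntegrable_congr (by rwa [uIoc_of_le hcd])).mpr hg₃
  rw [setIntegral_eq_of_subset_of_forall_sdiff_eq_zero measurableSet_Ioi Ioc_subset_Ioi_self
      fun x hx => h₀ x (lt_of_not_ge fun h => hx.2 ⟨hx.1, h⟩),
    ← intervalIntegral.integral_of_le ((hab.trans hbc).trans hcd),
    ← intervalIntegral.integral_add_adjacent_intervals (hf₁.trans hf₂) hf₃,
    ← intervalIntegral.integral_add_adjacent_intervals hf₁ hf₂,
    intervalIntegral.integral_congr_Ioo_of_le hab (h₁.mono Ioo_subset_Ioc_self),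
    intervalIntegral.integral_congr_Ioo_of_le hbc (h₂.mono Ioo_subset_Ioc_self),
    intervalIntegral.integral_congr_Ioo_of_le hcd (h₃.mono Ioo_subset_Ioc_self)]

theorem stmt4_general (dr da Fr Fa : ℝ) (hdr : 0 < dr) (hdra : dr < da)
    (hFa : 0 < Fa)
    (u : ℝ → ℝ)
    (h1 : ∀ r : ℝ, 0 < r → r ≤ dr / 2 →
      u r = -(Fr * dr / 2) * Real.log r
            + (Fr * dr / 2) * (1 / 2 + Real.log (dr / 2)) - (2 / 3) * Fa * (da - dr))
    (h2 : ∀ r : ℝ, dr / 2 < r → r ≤ dr →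
      u r = Fr * r ^ 2 / dr - 2 * Fr * r + Fr * dr - (2 / 3) * Fa * (da - dr))
    (h3 : ∀ r : ℝ, dr < r → r ≤ da →
      u r = -(2 * Fa / (3 * (da - dr) ^ 2)) *
            (2 * r ^ 3 - 3 * (da + dr) * r ^ 2 + 6 * da * dr * r - da ^ 2 * (3 * dr - da)))
    (h4 : ∀ r : ℝ, da < r → u r = 0) :
    (∫ r in Ioi (0 : ℝ), u r * r
      = Fr * dr ^ 3 * 17 / 192
        - (Fa / 30) * (da - dr) * (3 * da ^ 2 + 4 * da * dr + 3 * dr ^ 2)) ∧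
    ((0 < ∫ r in Ioi (0 : ℝ), u r * r) ↔
      Fr / Fa > 32 * (da - dr) * (3 * da ^ 2 + 4 * da * dr + 3 * dr ^ 2) / (85 * dr ^ 3)) := by
  have hdiff : da - dr ≠ 0 := (sub_pos.2 hdra).ne'
  have hvalue : ∫ r in Ioi (0 : ℝ), u r * r = Fr * dr ^ 3 * 17 / 192
      - (Fa / 30) * (da - dr) * (3 * da ^ 2 + 4 * da * dr + 3 * dr ^ 2) := by
    set A := (2 / 3) * Fa * (da - dr)
    set k := -(2 * Fa / (3 * (da - dr) ^ 2)) with hk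
    rw [setIntegral_Ioi_eq_of_eqOn_Ioc₃ (b := dr / 2) (c := dr) (by positivity) (by linarith)
      hdra.le
      (g₁ := fun r => (-(Fr * dr / 2) * log r + ((Fr * dr / 2) * (1 / 2 + log (dr / 2)) - A)) * r)
      (g₂ := fun r => (0 * r ^ 3 + Fr / dr * r ^ 2 + (-2 * Fr) * r + (Fr * dr - A)) * r)
      (g₃ := fun r => (2 * k * r ^ 3 + (-3 * (da + dr) * k) * r ^ 2 + 6 * da * dr * k * r
        + (-da ^ 2 * (3 * dr - da) * k)) * r)
      ((continuous_affine_log_mul_id _ _).intervalIntegrable _ _)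
      (by apply Continuous.intervalIntegrable; fun_prop)
      (by apply Continuous.intervalIntegrable; fun_prop)
      (fun r hr => by simp only [h1 r hr.1 hr.2]; ring)
      (fun r hr => by simp only [h2 r hr.1 hr.2]; ring)
      (fun r hr => by simp only [h3 r hr.1 hr.2]; ring)
      (fun r hr => by simp only [h4 r hr, zero_mul]),
      integral_affine_log_mul_id, integral_cubic_mul_id, integral_cubic_mul_id, hk]
    generalize log (dr / 2) = L
    field_simp
    ring
  refine ⟨hvalue, ?_⟩
  rw [hvalue, gt_iff_lt, div_lt_div_iff₀ (by positivity) hFa]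
  constructor <;> intro h <;> linarith

theorem stmt4 (dr da Fr Fa : ℝ) (hdr : 0 < dr) (hdra : dr < da)
    (hFr : 0 < Fr) (hFa : 0 < Fa)
    (u : ℝ → ℝ)
    (h1 : ∀ r : ℝ, 0 < r → r ≤ dr / 2 →
      u r = -(Fr * dr / 2) * Real.log r
            + (Fr * dr / 2) * (1 / 2 + Real.log (dr / 2)) - (2 / 3) * Fa * (da - dr))
    (h2 : ∀ r : ℝ, dr / 2 < r → r ≤ dr →
      u r = Fr * r ^ 2 / dr - 2 * Fr * r + Fr * dr - (2 / 3) * Fa * (da - dr))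
    (h3 : ∀ r : ℝ, dr < r → r ≤ da →
      u r = -(2 * Fa / (3 * (da - dr) ^ 2)) *
            (2 * r ^ 3 - 3 * (da + dr) * r ^ 2 + 6 * da * dr * r - da ^ 2 * (3 * dr - da)))
    (h4 : ∀ r : ℝ, da < r → u r = 0) :
    (∫ r in Ioi (0 : ℝ), u r * r
      = Fr * dr ^ 3 * 17 / 192
        - (Fa / 30) * (da - dr) * (3 * da ^ 2 + 4 * da * dr + 3 * dr ^ 2)) ∧
    ((0 < ∫ r in Ioi (0 : ℝ), u r * r) ↔
      Fr / Fa > 32 * (da - dr) * (3 * da ^ 2 + 4 * da * dr + 3 * dr ^ 2) / (85 * dr ^ 3)) :=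
  stmt4_general dr da Fr Fa hdr hdra hFa u h1 h2 h3 h4
end
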